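/- arXiv:1811.09526 — 3 statements merged into one kernel-verified Lean document; each statement's English description precedes it below -/
import Mathlib

section
/- Let ξ : ~H(G,K,θ) → End(Ind_K^G V) be the map defined by (ξ(F)f)(g) = Σ_{h∈G} F(h⁻¹g)(f(h)) for F ∈ ~H(G,K,θ), f ∈ Ind_K^G V, g ∈ G. Then ξ(F) commutes with the G-action on Ind_K^G V for every F ∈ ~H(G,K,θ), and ξ is a bijective *-algebra isomorphism from ~H(G,K,θ) onto the commutant End_G(Ind_K^G V): it is ℂ-linear, ξ(F₁*F₂) = ξ(F₁)∘ξ(F₂), ξ(F*) = ξ(F)* (adjoint), and moreover ⟨ξ(F₁), ξ(F₂)⟩ = |K|·⟨F₁, F₂⟩ for all F₁, F₂ ∈ ~H(G,K,θ), where End(Ind_K^G V) carries the normalized Hilbert–Schmidt inner product ⟨T₁,T₂⟩ = tr(T₂*T₁)/dim(Ind_K^G V). -/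
open scoped BigOperators ComplexConjugate Classical

set_option linter.unusedSectionVars false
set_option synthInstance.maxHeartbeats 1000000
set_option maxHeartbeats 1000000

noncomputable section

namespace MFT

variable {G : Type} [Group G] [Fintype G]
variable {V : Type} [NormedAddCommGroup V] [InnerProductSpace ℂ V] [FiniteDimensional ℂ V]

/-- Left translation of functions on `G`: `(translate h f) g = f (h⁻¹ * g)`.
This is the left regular action of `G`. -/
def translate {A : Type} (h : G) (f : G → A) : G → A := fun g => f (h⁻¹ * g)

/-- A representation by linear automorphisms is unitary if it preserves the inner product. -/
def IsUnitaryRep {H W : Type} [Group H] [NormedAddCommGroup W] [InnerProductSpace ℂ W]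
    (ρ : H →* (W ≃ₗ[ℂ] W)) : Prop :=
  ∀ (h : H) (x y : W), (inner ℂ (ρ h x) (ρ h y) : ℂ) = (inner ℂ x y : ℂ)

/-- Irreducibility of a representation: the space is nonzero and has no proper nonzero
invariant subspace. -/
def IsIrreducibleRep {H W : Type} [Group H] [AddCommGroup W] [Module ℂ W]
    (ρ : H →* (W ≃ₗ[ℂ] W)) : Prop :=
  (⊥ : Submodule ℂ W) ≠ ⊤ ∧
    ∀ p : Submodule ℂ W, (∀ (h : H) (x : W), x ∈ p → ρ h x ∈ p) → p = ⊥ ∨ p = ⊤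

variable (K : Subgroup G) (θ : ↥K →* (V ≃ₗ[ℂ] V))

/-- The space `Ind_K^G V` of the representation induced by `θ`:
functions `f : G → V` with `f (g k) = θ k⁻¹ (f g)`. -/
def ind : Submodule ℂ (G → V) where
  carrier := {f | ∀ (g : G) (k : K), f (g * (k : G)) = θ k⁻¹ (f g)}
  add_mem' := by
    intro f₁ f₂ h₁ h₂ g k
    simp only [Pi.add_apply, h₁ g k, h₂ g k, map_add]
  zero_mem' := by intro g k; simp
  smul_mem' := by
    intro c f hf g k
    simp only [Pi.smul_apply, hf g k, map_smul]

theorem translate_mem_ind {f : G → V} (hf : f ∈ ind K θ) (h : G) : translate h f ∈ ind K θ := by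
  intro g k
  simpa [translate, mul_assoc] using hf (h⁻¹ * g) k

/-- The left regular action of `G` on the induced space, `λ(h) f = f (h⁻¹ ·)`. -/
def lamL (h : G) : ↥(ind K θ) →ₗ[ℂ] ↥(ind K θ) where
  toFun f := ⟨translate h ↑f, translate_mem_ind K θ f.2 h⟩
  map_add' f₁ f₂ := by apply Subtype.ext; funext g; simp [translate]
  map_smul' c f := by apply Subtype.ext; funext g; simp [translate]

instance : AddCommGroup (↥(ind K θ) →ₗ[ℂ] ↥(ind K θ)) := LinearMap.addCommGroup

instance : Module ℂ (↥(ind K θ) →ₗ[ℂ] ↥(ind K θ)) := LinearMap.module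

/-- The Hecke algebra condition: `F (k₁ g k₂) = θ k₂⁻¹ ∘ F g ∘ θ k₁⁻¹`. -/
def IsHecke (F : G → (V →ₗ[ℂ] V)) : Prop :=
  ∀ (g : G) (k₁ k₂ : K),
    F ((k₁ : G) * g * (k₂ : G)) = (θ k₂⁻¹).toLinearMap ∘ₗ F g ∘ₗ (θ k₁⁻¹).toLinearMap

/-- Convolution on the Hecke algebra: `(F₁ * F₂) g = ∑ h, F₁ (h⁻¹ g) ∘ F₂ h`. -/
def heckeConv (F₁ F₂ : G → (V →ₗ[ℂ] V)) : G → (V →ₗ[ℂ] V) :=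
  fun g => ∑ h : G, F₁ (h⁻¹ * g) ∘ₗ F₂ h

/-- Involution on the Hecke algebra: `F* g = (F g⁻¹)*`. -/
def heckeStar (F : G → (V →ₗ[ℂ] V)) : G → (V →ₗ[ℂ] V) :=
  fun g => LinearMap.adjoint (F g⁻¹)

/-- The inner product on the Hecke algebra:
`⟨F₁, F₂⟩ = ∑ g, (dim V)⁻¹ tr (F₂(g)* ∘ F₁(g))`. -/
def heckeInner (F₁ F₂ : G → (V →ₗ[ℂ] V)) : ℂ :=
  ∑ g : G, (Module.finrank ℂ V : ℂ)⁻¹ *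
    LinearMap.trace ℂ V (LinearMap.adjoint (F₂ g) ∘ₗ F₁ g)

/-- `(ξ F) f g = ∑ h, F (h⁻¹ g) (f h)`. -/
def xiFun (F : G → (V →ₗ[ℂ] V)) (f : G → V) : G → V := fun g => ∑ h : G, F (h⁻¹ * g) (f h)

/-- `ξ F` as a linear endomorphism of `G → V`. -/
def xiL (F : G → (V →ₗ[ℂ] V)) : (G → V) →ₗ[ℂ] (G → V) where
  toFun := xiFun F
  map_add' f₁ f₂ := by funext g; simp [xiFun, Finset.sum_add_distrib]
  map_smul' c f := by funext g; simp [xiFun, Finset.smul_sum]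

/-- The paper's inner product on the induced space:
`⟨f₁, f₂⟩ = |K|⁻¹ ∑ g, ⟨f₁ g, f₂ g⟩_V` (conjugate-linear in the second variable). -/
def innerInd (f₁ f₂ : G → V) : ℂ := (Nat.card K : ℂ)⁻¹ * ∑ g : G, (inner ℂ (f₂ g) (f₁ g) : ℂ)

/-- Convolution of complex valued functions on `G`. -/
def convC (f₁ f₂ : G → ℂ) : G → ℂ := fun g => ∑ h : G, f₁ h * f₂ (h⁻¹ * g)

/-- The involution `f* g = conj (f g⁻¹)` on `L(G)`. -/
def starC (f : G → ℂ) : G → ℂ := fun g => conj (f g⁻¹)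

/-- The paper's inner product on `L(G)`: `⟨f₁, f₂⟩ = ∑ g, f₁ g • conj (f₂ g)`. -/
def innerC (f₁ f₂ : G → ℂ) : ℂ := ∑ g : G, f₁ g * conj (f₂ g)

/-- The function `ψ (k) = (d_θ/|K|) ⟨v, θ k v⟩` on `K`, extended by `0` on `G \ K`. -/
def psi (v : V) : G → ℂ := fun g =>
  if h : g ∈ K then ((Module.finrank ℂ V : ℂ) / (Nat.card K : ℂ)) * (inner ℂ (θ ⟨g, h⟩ v) v : ℂ)
  else 0

/-- `(T_v f) g = √(d_θ/|K|) ⟨f g, v⟩`. -/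
def Tv (v : V) (f : G → V) : G → ℂ := fun g =>
  (Real.sqrt ((Module.finrank ℂ V : ℝ) / (Nat.card K : ℝ)) : ℂ) * (inner ℂ v (f g) : ℂ)

/-- The Hecke algebra `H(G,K,ψ) = {f : f = ψ * f * ψ}` as a set. -/
def HSet (v : V) : Set (G → ℂ) := {f | convC (convC (psi K θ v) f) (psi K θ v) = f}

/-- `(S_v F) g = d_θ ⟨F g v, v⟩`. -/
def Sv (v : V) (F : G → (V →ₗ[ℂ] V)) : G → ℂ :=
  fun g => (Module.finrank ℂ V : ℂ) * (inner ℂ v (F g v) : ℂ)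

/-- A spherical function: an element of `H(G,K,ψ)` taking value `1` at the identity which
is an eigenvector of all convolution operators coming from `H(G,K,ψ)`. -/
def IsSpherical (v : V) (φ : G → ℂ) : Prop :=
  φ ∈ HSet K θ v ∧ φ 1 = 1 ∧ ∀ f ∈ HSet K θ v, ∃ c : ℂ, convC φ f = c • φ

/-- The intertwining space `Hom_{K_s}(Res^K_{K_s} θ, θ^s)` where `K_s = K ∩ s K s⁻¹`
and `θ^s (x) = θ (s⁻¹ x s)`. -/
def interSpace (s : G) : Submodule ℂ (V →ₗ[ℂ] V) where
  carrier := {T | ∀ (x : G) (hx : x ∈ K) (hx' : s⁻¹ * x * s ∈ K),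
      T ∘ₗ (θ ⟨x, hx⟩).toLinearMap = (θ ⟨s⁻¹ * x * s, hx'⟩).toLinearMap ∘ₗ T}
  add_mem' := by
    intro a b ha hb x hx hx'
    simp only [LinearMap.add_comp, LinearMap.comp_add, ha x hx hx', hb x hx hx']
  zero_mem' := by
    intro x hx hx'
    simp
  smul_mem' := by
    intro c a ha x hx hx'
    simp only [LinearMap.smul_comp, LinearMap.comp_smul, ha x hx hx']

/-- `S` is a complete set of representatives of the double cosets `K\G/K`. -/
def IsDoubleCosetReps (S : Finset G) : Prop :=
  ∀ g : G, ∃! s : G, s ∈ S ∧ ∃ k₁ k₂ : K, g = (k₁ : G) * s * (k₂ : G)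

/-- The commutant `End_G(Ind_K^G V)`. -/
def commutant : Submodule ℂ (↥(ind K θ) →ₗ[ℂ] ↥(ind K θ)) where
  carrier := {T | ∀ (h : G) (f : ↥(ind K θ)), T (lamL K θ h f) = lamL K θ h (T f)}
  add_mem' := by
    intro a b ha hb h f
    simp [ha h f, hb h f]
  zero_mem' := by intro h f; simp
  smul_mem' := by
    intro c a ha h f
    simp [ha h f]

/-- The space `Hom_G(W, Ind_K^G V)` of `G`-equivariant linear maps from `(σ, W)` to the
induced representation. -/
def homGInd {W : Type} [AddCommGroup W] [Module ℂ W] (σ : G →* (W ≃ₗ[ℂ] W)) :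
    Submodule ℂ (W →ₗ[ℂ] (G → V)) where
  carrier := {A | (∀ w : W, A w ∈ ind K θ) ∧ ∀ (g : G) (w : W), A (σ g w) = translate g (A w)}
  add_mem' := by
    rintro A B ⟨hA₁, hA₂⟩ ⟨hB₁, hB₂⟩
    refine ⟨fun w => (ind K θ).add_mem (hA₁ w) (hB₁ w), fun g w => ?_⟩
    funext x
    simp [translate, hA₂ g w, hB₂ g w, Pi.add_apply]
  zero_mem' := by
    refine ⟨fun w => (ind K θ).zero_mem, fun g w => ?_⟩
    funext x
    simp [translate]
  smul_mem' := by
    rintro c A ⟨hA₁, hA₂⟩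
    refine ⟨fun w => (ind K θ).smul_mem c (hA₁ w), fun g w => ?_⟩
    funext x
    simp [translate, hA₂ g w]

/-- `Ind_K^G θ` is multiplicity-free: every irreducible representation of `G` occurs with
multiplicity at most `1`. -/
def IsMultFree : Prop :=
  ∀ (W : Type) [AddCommGroup W] [Module ℂ W] [FiniteDimensional ℂ W]
    (σ : G →* (W ≃ₗ[ℂ] W)), IsIrreducibleRep σ → Module.finrank ℂ ↥(homGInd K θ σ) ≤ 1

theorem convC_add_left (f₁ f₂ g : G → ℂ) : convC (f₁ + f₂) g = convC f₁ g + convC f₂ g := by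
  funext x
  simp [convC, add_mul, Finset.sum_add_distrib]

theorem convC_add_right (f g₁ g₂ : G → ℂ) : convC f (g₁ + g₂) = convC f g₁ + convC f g₂ := by
  funext x
  simp [convC, mul_add, Finset.sum_add_distrib]

theorem convC_smul_left (c : ℂ) (f g : G → ℂ) : convC (c • f) g = c • convC f g := by
  funext x
  simp [convC, Finset.mul_sum, mul_assoc]

theorem convC_smul_right (c : ℂ) (f g : G → ℂ) : convC f (c • g) = c • convC f g := by
  funext x
  simp [convC, Finset.mul_sum, mul_left_comm]

theorem convC_zero_left (g : G → ℂ) : convC 0 g = 0 := by funext x; simp [convC]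

theorem convC_zero_right (f : G → ℂ) : convC f 0 = 0 := by funext x; simp [convC]

/-- The Hecke algebra `H(G,K,ψ)` as a subspace of `L(G)`. -/
def heckeSub (v : V) : Submodule ℂ (G → ℂ) where
  carrier := HSet K θ v
  add_mem' := by
    intro a b ha hb
    have ha' : convC (convC (psi K θ v) a) (psi K θ v) = a := ha
    have hb' : convC (convC (psi K θ v) b) (psi K θ v) = b := hb
    show convC (convC (psi K θ v) (a + b)) (psi K θ v) = a + b
    rw [convC_add_right, convC_add_left, ha', hb']
  zero_mem' := by
    show convC (convC (psi K θ v) 0) (psi K θ v) = 0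
    rw [convC_zero_right, convC_zero_left]
  smul_mem' := by
    intro c a ha
    have ha' : convC (convC (psi K θ v) a) (psi K θ v) = a := ha
    show convC (convC (psi K θ v) (c • a)) (psi K θ v) = c • a
    rw [convC_smul_right, convC_smul_left, ha']

/-- The subspace `I(G,K,ψ) = {f ∈ L(G) : f * ψ = f}`. -/
def ISub (v : V) : Submodule ℂ (G → ℂ) where
  carrier := {φ | convC φ (psi K θ v) = φ}
  add_mem' := by
    intro a b ha hb
    have ha' : convC a (psi K θ v) = a := ha
    have hb' : convC b (psi K θ v) = b := hb
    show convC (a + b) (psi K θ v) = a + b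
    rw [convC_add_left, ha', hb']
  zero_mem' := by
    show convC 0 (psi K θ v) = 0
    rw [convC_zero_left]
  smul_mem' := by
    intro c a ha
    have ha' : convC a (psi K θ v) = a := ha
    show convC (c • a) (psi K θ v) = c • a
    rw [convC_smul_left, ha']

/-- The subspace of `L(G)` spanned by the left translates of `φ`. -/
def sphSpan (φ : G → ℂ) : Submodule ℂ (G → ℂ) :=
  Submodule.span ℂ (Set.range fun g : G => translate g φ)

/-- A submodule of functions on `G` invariant under all left translations. -/
def IsInvariantSub {A : Type} [AddCommGroup A] [Module ℂ A] (p : Submodule ℂ (G → A)) : Prop :=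
  ∀ h : G, ∀ f ∈ p, translate h f ∈ p

/-- `p` is an irreducible `G`-invariant subspace of the induced representation. -/
def IsIrredSubOfInd (p : Submodule ℂ (G → V)) : Prop :=
  p ≤ ind K θ ∧ IsInvariantSub p ∧ p ≠ ⊥ ∧
    ∀ q : Submodule ℂ (G → V), q ≤ p → IsInvariantSub q → q = ⊥ ∨ q = p

/-!
Averaging over `K`, `f ↦ |K|⁻¹ ∑ₖ θ(k) f(· k)`, is a projection of `G → V` onto `Ind_K^G V`
that commutes with left translations and that every `ξ(F)` absorbs on the right. Hence
`ξ(F)` applied to the averaged delta function `e_v` at the identity returns `g ↦ F(g) v`, which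
gives injectivity; conversely, since every `f ∈ Ind_K^G V` is `∑ₕ λ(h) e_{f(h)}`, an intertwiner
`T` equals `ξ(F)` for `F(g) v := (T e_v)(g)`. For the Hilbert-Schmidt identity both traces are
computed on `G → V` from diagonal blocks: `tr ξ(F) = |G| tr F(1)`, and the trace of the
projection gives `dim Ind_K^G V = |G| d_θ / |K|`.
-/

theorem _root_.LinearMap.trace_pi_eq_sum {R M ι : Type*} [CommRing R] [AddCommGroup M]
    [Module R M] [Module.Free R M] [Module.Finite R M] [Fintype ι] [DecidableEq ι]
    (A : (ι → M) →ₗ[R] (ι → M)) :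
    LinearMap.trace R (ι → M) A =
      ∑ i, LinearMap.trace R M (LinearMap.proj i ∘ₗ A ∘ₗ LinearMap.single R (fun _ => M) i) := by
  have hA : A = ∑ i, (A ∘ₗ LinearMap.single R (fun _ => M) i) ∘ₗ LinearMap.proj i := by
    refine LinearMap.ext fun f => ?_
    simp only [LinearMap.sum_apply, LinearMap.comp_apply, LinearMap.coe_proj,
      Function.eval, LinearMap.coe_single, ← map_sum, Finset.univ_sum_single]
  conv_lhs => rw [hA]
  rw [map_sum]
  refine Finset.sum_congr rfl fun i _ => ?_
  rw [LinearMap.trace_comp_comm']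

theorem _root_.LinearMap.IsProj.trace_restrict {R M : Type*} [Field R] [AddCommGroup M]
    [Module R M] [FiniteDimensional R M] {p : Submodule R M} {E A : M →ₗ[R] M}
    (hE : LinearMap.IsProj p E) (hAE : A ∘ₗ E = A) (hA : ∀ x ∈ p, A x ∈ p) :
    LinearMap.trace R p (A.restrict hA) = LinearMap.trace R M A := by
  have hfactor : A = p.subtype ∘ₗ A.restrict hA ∘ₗ E.codRestrict p hE.map_mem := by
    conv_lhs => rw [← hAE]
    rfl
  have hsection : E.codRestrict p hE.map_mem ∘ₗ p.subtype = LinearMap.id :=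
    LinearMap.ext fun x => Subtype.ext (hE.map_id x x.2)
  conv_rhs => rw [hfactor]
  rw [LinearMap.trace_comp_comm', LinearMap.comp_assoc, hsection, LinearMap.comp_id]

section Xi

variable {K θ}

theorem IsHecke.apply_mul_coe {F : G → (V →ₗ[ℂ] V)} (hF : IsHecke K θ F) (g : G) (k : K) :
    F (g * k) = (θ k⁻¹).toLinearMap ∘ₗ F g := by
  simpa using hF g 1 k

theorem IsHecke.apply_coe_mul {F : G → (V →ₗ[ℂ] V)} (hF : IsHecke K θ F) (g : G) (k : K) :
    F (k * g) = F g ∘ₗ (θ k⁻¹).toLinearMap := by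
  simpa using hF g k 1

theorem xiFun_mem_ind {F : G → (V →ₗ[ℂ] V)} (hF : IsHecke K θ F) (f : G → V) :
    xiFun F f ∈ ind K θ := by
  intro g k
  simp only [xiFun, map_sum, ← mul_assoc, hF.apply_mul_coe, LinearMap.comp_apply,
    LinearEquiv.coe_coe]

theorem xiFun_translate (F : G → (V →ₗ[ℂ] V)) (h : G) (f : G → V) :
    xiFun F (translate h f) = translate h (xiFun F f) := by
  funext g
  refine (Fintype.sum_equiv (Equiv.mulLeft h) _ _ fun x => ?_).symm
  simp [translate, mul_assoc]

theorem xiFun_add_left (F₁ F₂ : G → (V →ₗ[ℂ] V)) (f : G → V) :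
    xiFun (F₁ + F₂) f = xiFun F₁ f + xiFun F₂ f := by
  funext g
  simp [xiFun, Finset.sum_add_distrib]

theorem xiFun_smul_left (c : ℂ) (F : G → (V →ₗ[ℂ] V)) (f : G → V) :
    xiFun (c • F) f = c • xiFun F f := by
  funext g
  simp [xiFun, Finset.smul_sum]

theorem xiFun_heckeConv (F₁ F₂ : G → (V →ₗ[ℂ] V)) (f : G → V) :
    xiFun (heckeConv F₁ F₂) f = xiFun F₁ (xiFun F₂ f) := by
  funext g
  simp only [xiFun, heckeConv, LinearMap.sum_apply, LinearMap.comp_apply, map_sum]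
  conv_rhs => rw [Finset.sum_comm]
  refine Finset.sum_congr rfl fun h _ => Fintype.sum_equiv (Equiv.mulLeft h) _ _ fun u => ?_
  simp [mul_assoc]

theorem xiL_heckeConv (F₁ F₂ : G → (V →ₗ[ℂ] V)) :
    xiL (heckeConv F₁ F₂) = xiL F₁ ∘ₗ xiL F₂ :=
  LinearMap.ext (xiFun_heckeConv F₁ F₂)

theorem innerInd_xiFun_left (F : G → (V →ₗ[ℂ] V)) (f₁ f₂ : G → V) :
    innerInd K (xiFun F f₁) f₂ = innerInd K f₁ (xiFun (heckeStar F) f₂) := by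
  simp only [innerInd, xiFun, heckeStar, inner_sum, sum_inner, LinearMap.adjoint_inner_left,
    mul_inv_rev, inv_inv]
  rw [Finset.sum_comm]

theorem xiFun_single (F : G → (V →ₗ[ℂ] V)) (a : G) (v : V) :
    xiFun F (Pi.single a v) = fun g => F (a⁻¹ * g) v := by
  funext g
  simp [xiFun, Pi.single_apply, apply_ite (F _)]

theorem trace_xiL (F : G → (V →ₗ[ℂ] V)) :
    LinearMap.trace ℂ (G → V) (xiL F) = Fintype.card G * LinearMap.trace ℂ V (F 1) := by
  have hdiag (g : G) :
      LinearMap.proj g ∘ₗ xiL F ∘ₗ LinearMap.single ℂ (fun _ => V) g = F 1 :=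
    LinearMap.ext fun v => (congrFun (xiFun_single F g v) g).trans (by simp)
  simp [LinearMap.trace_pi_eq_sum, hdiag]

theorem heckeConv_heckeStar_apply_one (F₁ F₂ : G → (V →ₗ[ℂ] V)) :
    heckeConv (heckeStar F₂) F₁ 1 = ∑ h, LinearMap.adjoint (F₂ h) ∘ₗ F₁ h := by
  simp [heckeConv, heckeStar]

end Xi

theorem inv_natCard_smul_sum_const {W : Type*} [AddCommGroup W] [Module ℂ W] (x : W) :
    (Nat.card K : ℂ)⁻¹ • ∑ _k : K, x = x := by
  rw [Finset.sum_const, Finset.card_univ, ← Nat.card_eq_fintype_card, ← Nat.cast_smul_eq_nsmul ℂ,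
    smul_smul, inv_mul_cancel₀ (Nat.cast_ne_zero.mpr Nat.card_pos.ne'), one_smul]

def avgInd : (G → V) →ₗ[ℂ] (G → V) where
  toFun f g := (Nat.card K : ℂ)⁻¹ • ∑ k : K, θ k (f (g * k))
  map_add' f₁ f₂ := by funext g; simp [Finset.sum_add_distrib]
  map_smul' c f := by funext g; simp [Finset.smul_sum, smul_comm c]

section Avg

variable {K θ}

theorem avgInd_apply (f : G → V) (g : G) :
    avgInd K θ f g = (Nat.card K : ℂ)⁻¹ • ∑ k : K, θ k (f (g * k)) :=
  rfl

theorem avgInd_mem (f : G → V) : avgInd K θ f ∈ ind K θ := by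
  intro g k₀
  simp only [avgInd_apply, map_smul, map_sum]
  congr 1
  refine Fintype.sum_equiv (Equiv.mulLeft k₀) _ _ fun k => ?_
  simp [mul_assoc, map_mul]

theorem avgInd_of_mem {f : G → V} (hf : f ∈ ind K θ) : avgInd K θ f = f := by
  funext g
  have hterm (k : K) : θ k (f (g * k)) = f g := by
    rw [hf g k, map_inv]
    exact (θ k).apply_symm_apply _
  simp only [avgInd_apply, hterm, inv_natCard_smul_sum_const K]

theorem isProj_avgInd : LinearMap.IsProj (ind K θ) (avgInd K θ) :=
  ⟨avgInd_mem, fun _ => avgInd_of_mem⟩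

theorem avgInd_translate (h : G) (f : G → V) :
    avgInd K θ (translate h f) = translate h (avgInd K θ f) := by
  funext g
  simp [avgInd_apply, translate, mul_assoc]

theorem avgInd_comp_mul_right (k : K) (f : G → V) :
    avgInd K θ (fun x => f (x * k)) = avgInd K θ (fun x => θ k⁻¹ (f x)) := by
  funext g
  simp only [avgInd_apply]
  congr 1
  refine Fintype.sum_equiv (Equiv.mulRight k) _ _ fun j => ?_
  simp [mul_assoc, map_mul]

theorem xiL_comp_avgInd {F : G → (V →ₗ[ℂ] V)} (hF : IsHecke K θ F) :
    xiL F ∘ₗ avgInd K θ = xiL F := by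
  refine LinearMap.ext fun f => funext fun g => ?_
  have hterm (h : G) (k : K) :
      F (h⁻¹ * g) (θ k (f (h * k))) = F ((h * k)⁻¹ * g) (f (h * k)) := by
    rw [mul_inv_rev, mul_assoc, ← Subgroup.coe_inv, hF.apply_coe_mul, inv_inv]
    rfl
  have hshift (k : K) : ∑ h : G, F ((h * k)⁻¹ * g) (f (h * k)) = ∑ h, F (h⁻¹ * g) (f h) :=
    Fintype.sum_equiv (Equiv.mulRight (k : G)) _ _ fun _ => rfl
  simp only [LinearMap.comp_apply, xiL, LinearMap.coe_mk, AddHom.coe_mk, xiFun, avgInd_apply,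
    map_smul, map_sum, hterm]
  rw [← Finset.smul_sum, Finset.sum_comm]
  simp only [hshift, inv_natCard_smul_sum_const K]

theorem xiFun_avgInd {F : G → (V →ₗ[ℂ] V)} (hF : IsHecke K θ F) (f : G → V) :
    xiFun F (avgInd K θ f) = xiFun F f :=
  LinearMap.congr_fun (xiL_comp_avgInd hF) f

theorem trace_avgInd : LinearMap.trace ℂ (G → V) (avgInd K θ) =
    Fintype.card G * ((Nat.card K : ℂ)⁻¹ * Module.finrank ℂ V) := by
  have hdiag (g : G) : LinearMap.proj g ∘ₗ avgInd K θ ∘ₗ LinearMap.single ℂ (fun _ => V) g =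
      (Nat.card K : ℂ)⁻¹ • LinearMap.id := by
    refine LinearMap.ext fun v => ?_
    simp [avgInd_apply, Pi.single_apply, apply_ite (θ _)]
  simp [LinearMap.trace_pi_eq_sum, hdiag]

theorem finrank_ind : (Module.finrank ℂ (ind K θ) : ℂ) =
    Fintype.card G * ((Nat.card K : ℂ)⁻¹ * Module.finrank ℂ V) :=
  isProj_avgInd.trace.symm.trans trace_avgInd

end Avg

def indVec : V →ₗ[ℂ] ind K θ :=
  (avgInd K θ ∘ₗ LinearMap.single ℂ (fun _ : G => V) 1).codRestrict _ fun _ => avgInd_mem _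

section Commutant

variable {K θ}

theorem coe_indVec (v : V) : (indVec K θ v : G → V) = avgInd K θ (Pi.single 1 v) :=
  rfl

theorem xiFun_indVec {F : G → (V →ₗ[ℂ] V)} (hF : IsHecke K θ F) (v : V) :
    xiFun F (indVec K θ v) = fun g => F g v := by
  rw [coe_indVec, xiFun_avgInd hF, xiFun_single]
  simp

theorem lamL_inv_indVec (k : K) (v : V) :
    lamL K θ (k⁻¹ : K) (indVec K θ v) = indVec K θ (θ k⁻¹ v) := by
  have hsingle :
      translate ((k⁻¹ : K) : G) (Pi.single 1 v) = fun x : G => (Pi.single 1 v : G → V) (x * k) := by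
    funext x
    simp [translate, Pi.single_apply, mul_eq_one_comm]
  apply Subtype.ext
  change translate _ (avgInd K θ (Pi.single 1 v)) = avgInd K θ (Pi.single 1 (θ k⁻¹ v))
  rw [← avgInd_translate, hsingle, avgInd_comp_mul_right]
  congr 1
  funext x
  by_cases hx : x = 1 <;> simp [hx]

theorem sum_translate_single (f : G → V) : ∑ h, translate h (Pi.single 1 (f h)) = f := by
  funext g
  simp [translate, Pi.single_apply, inv_mul_eq_one]

theorem sum_lamL_indVec (f : ind K θ) : ∑ h, lamL K θ h (indVec K θ ((f : G → V) h)) = f := by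
  apply Subtype.ext
  rw [Submodule.coe_sum]
  change ∑ h, translate h (avgInd K θ (Pi.single 1 ((f : G → V) h))) = _
  simp only [← avgInd_translate, ← map_sum, sum_translate_single, avgInd_of_mem f.2]

theorem eq_of_xiFun_eq {F₁ F₂ : G → (V →ₗ[ℂ] V)} (h₁ : IsHecke K θ F₁) (h₂ : IsHecke K θ F₂)
    (heq : ∀ f ∈ ind K θ, xiFun F₁ f = xiFun F₂ f) : F₁ = F₂ :=
  funext fun g => LinearMap.ext fun v => by
    simpa [xiFun_indVec h₁, xiFun_indVec h₂] using congrFun (heq _ (indVec K θ v).2) g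

theorem exists_isHecke_xiFun_eq (T : ind K θ →ₗ[ℂ] ind K θ)
    (hT : ∀ (h : G) (f : ind K θ), T (lamL K θ h f) = lamL K θ h (T f)) :
    ∃ F : G → (V →ₗ[ℂ] V), IsHecke K θ F ∧ ∀ f : ind K θ, (T f : G → V) = xiFun F f := by
  refine ⟨fun g => LinearMap.proj g ∘ₗ (ind K θ).subtype ∘ₗ T ∘ₗ indVec K θ, ?_, fun f => ?_⟩
  · intro g k₁ k₂
    refine LinearMap.ext fun v => ?_
    change (T (indVec K θ v) : G → V) (k₁ * g * k₂) =
      θ k₂⁻¹ ((T (indVec K θ (θ k₁⁻¹ v)) : G → V) g)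
    rw [(T (indVec K θ v)).2 (k₁ * g) k₂, ← lamL_inv_indVec, hT]
    simp [lamL, translate]
  · conv_lhs => rw [← sum_lamL_indVec f, map_sum]
    simp only [hT]
    funext g
    simp [lamL, translate, xiFun]

theorem trace_restrict_xiL_heckeStar_comp {F₁ : G → (V →ₗ[ℂ] V)} (h₁ : IsHecke K θ F₁)
    (F₂ : G → (V →ₗ[ℂ] V)) (hmem : ∀ f ∈ ind K θ, (xiL (heckeStar F₂) ∘ₗ xiL F₁) f ∈ ind K θ) :
    LinearMap.trace ℂ (ind K θ) ((xiL (heckeStar F₂) ∘ₗ xiL F₁).restrict hmem) =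
      Fintype.card G * ∑ h, LinearMap.trace ℂ V (LinearMap.adjoint (F₂ h) ∘ₗ F₁ h) := by
  rw [isProj_avgInd.trace_restrict (by rw [LinearMap.comp_assoc, xiL_comp_avgInd h₁]),
    ← xiL_heckeConv, trace_xiL, heckeConv_heckeStar_apply_one, map_sum]

end Commutant

theorem statement0_general (K : Subgroup G) (θ : ↥K →* (V ≃ₗ[ℂ] V)) :
    -- ξ(F) preserves the induced space and commutes with the G-action
    (∀ F : G → (V →ₗ[ℂ] V), IsHecke K θ F →
      (∀ f ∈ ind K θ, xiFun F f ∈ ind K θ) ∧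
      (∀ (h : G), ∀ f ∈ ind K θ, xiFun F (translate h f) = translate h (xiFun F f))) ∧
    -- ξ is ℂ-linear
    (∀ (F₁ F₂ : G → (V →ₗ[ℂ] V)) (f : G → V), xiFun (F₁ + F₂) f = xiFun F₁ f + xiFun F₂ f) ∧
    (∀ (c : ℂ) (F : G → (V →ₗ[ℂ] V)) (f : G → V), xiFun (c • F) f = c • xiFun F f) ∧
    -- ξ transforms convolution into composition
    (∀ F₁ F₂ : G → (V →ₗ[ℂ] V), IsHecke K θ F₁ → IsHecke K θ F₂ →
      ∀ f : G → V, xiFun (heckeConv F₁ F₂) f = xiFun F₁ (xiFun F₂ f)) ∧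
    -- ξ(F*) is the adjoint of ξ(F) with respect to the inner product of `Ind_K^G V`
    (∀ F : G → (V →ₗ[ℂ] V), IsHecke K θ F → ∀ f₁ ∈ ind K θ, ∀ f₂ ∈ ind K θ,
      innerInd K (xiFun F f₁) f₂ = innerInd K f₁ (xiFun (heckeStar F) f₂)) ∧
    -- ξ is injective on the Hecke algebra
    (∀ F₁ F₂ : G → (V →ₗ[ℂ] V), IsHecke K θ F₁ → IsHecke K θ F₂ →
      (∀ f ∈ ind K θ, xiFun F₁ f = xiFun F₂ f) → F₁ = F₂) ∧
    -- ξ is surjective onto the commutant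
    (∀ T : ↥(ind K θ) →ₗ[ℂ] ↥(ind K θ),
      (∀ (h : G) (f : ↥(ind K θ)), T (lamL K θ h f) = lamL K θ h (T f)) →
      ∃ F : G → (V →ₗ[ℂ] V), IsHecke K θ F ∧ ∀ f : ↥(ind K θ), (T f : G → V) = xiFun F ↑f) ∧
    -- ⟨ξ F₁, ξ F₂⟩ = |K| ⟨F₁, F₂⟩, where the left hand side is the normalized Hilbert-Schmidt
    -- inner product `tr((ξ F₂)* ∘ (ξ F₁)) / dim (Ind_K^G V)` (the adjoint `(ξ F₂)*` being
    -- computed as `ξ (F₂*)`, by the adjoint property above)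
    (∀ F₁ F₂ : G → (V →ₗ[ℂ] V), IsHecke K θ F₁ → IsHecke K θ F₂ →
      ∀ hmem : ∀ f ∈ ind K θ, (xiL (heckeStar F₂) ∘ₗ xiL F₁) f ∈ ind K θ,
        (Module.finrank ℂ ↥(ind K θ) : ℂ)⁻¹ *
            LinearMap.trace ℂ ↥(ind K θ) ((xiL (heckeStar F₂) ∘ₗ xiL F₁).restrict hmem) =
          (Nat.card K : ℂ) * heckeInner F₁ F₂) := by
  refine ⟨fun F hF => ⟨fun f _ => xiFun_mem_ind hF f, fun h f _ => xiFun_translate F h f⟩,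
    xiFun_add_left, xiFun_smul_left, fun F₁ F₂ _ _ => xiFun_heckeConv F₁ F₂,
    fun F _ f₁ _ f₂ _ => innerInd_xiFun_left F f₁ f₂, fun F₁ F₂ h₁ h₂ => eq_of_xiFun_eq h₁ h₂,
    exists_isHecke_xiFun_eq, fun F₁ F₂ h₁ _ hmem => ?_⟩
  rw [trace_restrict_xiL_heckeStar_comp h₁ F₂ hmem, finrank_ind, heckeInner, ← Finset.mul_sum]
  field_simp

/-- Mackey's formula for invariants: the map
`ξ : ~H(G,K,θ) → End(Ind_K^G V)`, `(ξ F) f g = ∑ h, F (h⁻¹ g) (f h)`, maps the Hecke algebra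
onto the commutant `End_G(Ind_K^G V)`, is a bijective ∗-algebra isomorphism, and satisfies
`⟨ξ F₁, ξ F₂⟩ = |K| ⟨F₁, F₂⟩` for the normalized Hilbert-Schmidt inner product. -/
theorem statement0 (K : Subgroup G) (θ : ↥K →* (V ≃ₗ[ℂ] V))
    (hu : IsUnitaryRep θ) (hirr : IsIrreducibleRep θ) :
    -- ξ(F) preserves the induced space and commutes with the G-action
    (∀ F : G → (V →ₗ[ℂ] V), IsHecke K θ F →
      (∀ f ∈ ind K θ, xiFun F f ∈ ind K θ) ∧
      (∀ (h : G), ∀ f ∈ ind K θ, xiFun F (translate h f) = translate h (xiFun F f))) ∧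
    -- ξ is ℂ-linear
    (∀ (F₁ F₂ : G → (V →ₗ[ℂ] V)) (f : G → V), xiFun (F₁ + F₂) f = xiFun F₁ f + xiFun F₂ f) ∧
    (∀ (c : ℂ) (F : G → (V →ₗ[ℂ] V)) (f : G → V), xiFun (c • F) f = c • xiFun F f) ∧
    -- ξ transforms convolution into composition
    (∀ F₁ F₂ : G → (V →ₗ[ℂ] V), IsHecke K θ F₁ → IsHecke K θ F₂ →
      ∀ f : G → V, xiFun (heckeConv F₁ F₂) f = xiFun F₁ (xiFun F₂ f)) ∧
    -- ξ(F*) is the adjoint of ξ(F) with respect to the inner product of `Ind_K^G V`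
    (∀ F : G → (V →ₗ[ℂ] V), IsHecke K θ F → ∀ f₁ ∈ ind K θ, ∀ f₂ ∈ ind K θ,
      innerInd K (xiFun F f₁) f₂ = innerInd K f₁ (xiFun (heckeStar F) f₂)) ∧
    -- ξ is injective on the Hecke algebra
    (∀ F₁ F₂ : G → (V →ₗ[ℂ] V), IsHecke K θ F₁ → IsHecke K θ F₂ →
      (∀ f ∈ ind K θ, xiFun F₁ f = xiFun F₂ f) → F₁ = F₂) ∧
    -- ξ is surjective onto the commutant
    (∀ T : ↥(ind K θ) →ₗ[ℂ] ↥(ind K θ),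
      (∀ (h : G) (f : ↥(ind K θ)), T (lamL K θ h f) = lamL K θ h (T f)) →
      ∃ F : G → (V →ₗ[ℂ] V), IsHecke K θ F ∧ ∀ f : ↥(ind K θ), (T f : G → V) = xiFun F ↑f) ∧
    -- ⟨ξ F₁, ξ F₂⟩ = |K| ⟨F₁, F₂⟩, where the left hand side is the normalized Hilbert-Schmidt
    -- inner product `tr((ξ F₂)* ∘ (ξ F₁)) / dim (Ind_K^G V)` (the adjoint `(ξ F₂)*` being
    -- computed as `ξ (F₂*)`, by the adjoint property above)
    (∀ F₁ F₂ : G → (V →ₗ[ℂ] V), IsHecke K θ F₁ → IsHecke K θ F₂ →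
      ∀ hmem : ∀ f ∈ ind K θ, (xiL (heckeStar F₂) ∘ₗ xiL F₁) f ∈ ind K θ,
        (Module.finrank ℂ ↥(ind K θ) : ℂ)⁻¹ *
            LinearMap.trace ℂ ↥(ind K θ) ((xiL (heckeStar F₂) ∘ₗ xiL F₁).restrict hmem) =
          (Nat.card K : ℂ) * heckeInner F₁ F₂) :=
  statement0_general K θ

end MFT
end
end

section
/- (1) The map T_v : Ind_K^G V → L(G) defined by (T_v f)(g) = √(d_θ/|K|)·⟨f(g), v⟩_V is a G-equivariant linear isometry of Ind_K^G V into L(G) equipped with the left regular representation; in particular its image I(G,K,ψ) := T_v(Ind_K^G V) is a G-invariant subspace of L(G) that is G-isomorphic to Ind_K^G V. (2) The function ψ satisfies ψ*ψ = ψ and ψ* = ψ, and the operator P : L(G) → L(G), Pf = f*ψ, is the orthogonal projection of L(G) onto I(G,K,ψ); consequently I(G,K,ψ) = {f*ψ : f ∈ L(G)} = {f ∈ L(G) : f*ψ = f}. -/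
open scoped BigOperators ComplexConjugate Classical

set_option linter.unusedSectionVars false
set_option synthInstance.maxHeartbeats 1000000
set_option maxHeartbeats 1000000

noncomputable section

namespace MFT

variable {G : Type} [Group G] [Fintype G]
variable {V : Type} [NormedAddCommGroup V] [InnerProductSpace ℂ V] [FiniteDimensional ℂ V]

variable (K : Subgroup G) (θ : ↥K →* (V ≃ₗ[ℂ] V))

/-!
Everything rests on Schur orthogonality for the irreducible unitary `θ`: for a unit vector `v`,
`∑ₖ ⟪θ k v, x⟫ ⟪y, θ k v⟫ = (|K| / d_θ) ⟪y, x⟫`. Averaging over right translates by `K`, this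
turns `⟪T_v f₁, T_v f₂⟫` into the inner product of the induced space, and it shows that
`f ↦ f ∗ ψ` fixes `ψ` and every `T_v f`. Conversely `φ ∗ ψ = T_v (indLift θ v φ)`, so the fixed
points of `P` are exactly the image of `T_v`. Finally `ψ* = ψ` by unitarity, which makes `P`
self-adjoint.
-/

open scoped InnerProductSpace

section Representation

variable {H W : Type} [Group H]

theorem IsIrreducibleRep.nontrivial [AddCommGroup W] [Module ℂ W] {ρ : H →* (W ≃ₗ[ℂ] W)}
    (hρ : IsIrreducibleRep ρ) : Nontrivial W := by
  by_contra h
  rw [not_nontrivial_iff_subsingleton] at h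
  exact hρ.1 (Subsingleton.elim _ _)

theorem IsIrreducibleRep.exists_eq_smul_id [AddCommGroup W] [Module ℂ W] [FiniteDimensional ℂ W]
    {ρ : H →* (W ≃ₗ[ℂ] W)} (hρ : IsIrreducibleRep ρ) (T : W →ₗ[ℂ] W)
    (hT : ∀ (h : H) (x : W), T (ρ h x) = ρ h (T x)) : ∃ c : ℂ, T = c • LinearMap.id := by
  have := hρ.nontrivial
  obtain ⟨c, hc⟩ := Module.End.exists_eigenvalue T
  have hinv : ∀ (h : H) (x : W),
      x ∈ Module.End.eigenspace T c → ρ h x ∈ Module.End.eigenspace T c := by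
    intro h x hx
    rw [Module.End.mem_eigenspace_iff] at hx ⊢
    rw [hT, hx, map_smul]
  refine ⟨c, LinearMap.ext fun x => ?_⟩
  rcases hρ.2 _ hinv with hbot | htop
  · exact absurd hbot hc
  · exact Module.End.mem_eigenspace_iff.mp (htop ▸ Submodule.mem_top)

variable [NormedAddCommGroup W] [InnerProductSpace ℂ W] {ρ : H →* (W ≃ₗ[ℂ] W)}

theorem IsUnitaryRep.inner_map_inv_left (hρ : IsUnitaryRep ρ) (h : H) (x y : W) :
    ⟪ρ h⁻¹ x, y⟫_ℂ = ⟪x, ρ h y⟫_ℂ := by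
  rw [← hρ h, ← LinearEquiv.mul_apply, ← map_mul, mul_inv_cancel, map_one]
  rfl

theorem IsUnitaryRep.inner_map_inv_right (hρ : IsUnitaryRep ρ) (h : H) (x y : W) :
    ⟪x, ρ h⁻¹ y⟫_ℂ = ⟪ρ h x, y⟫_ℂ := by
  rw [← inner_conj_symm, hρ.inner_map_inv_left, inner_conj_symm]

/-- Schur orthogonality: by Schur's lemma `∑ₕ |ρ h u⟩⟨ρ h u|` is a scalar, and its trace
`|H| ⟪u, u⟫` determines the scalar. -/
theorem IsIrreducibleRep.sum_inner_mul_inner [Fintype H] [FiniteDimensional ℂ W]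
    (hu : IsUnitaryRep ρ) (hirr : IsIrreducibleRep ρ) (u x y : W) :
    ∑ h : H, ⟪ρ h u, x⟫_ℂ * ⟪y, ρ h u⟫_ℂ =
      (Nat.card H : ℂ) / Module.finrank ℂ W * ⟪u, u⟫_ℂ * ⟪y, x⟫_ℂ := by
  have := hirr.nontrivial
  set T : W →ₗ[ℂ] W := ∑ h : H, (InnerProductSpace.rankOne ℂ (ρ h u) (ρ h u)).toLinearMap
  have hT : ∀ z, T z = ∑ h : H, ⟪ρ h u, z⟫_ℂ • ρ h u := by simp [T]
  have hcomm : ∀ (g : H) (z : W), T (ρ g z) = ρ g (T z) := by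
    intro g z
    rw [hT, hT, map_sum, ← Equiv.sum_comp (Equiv.mulLeft g)]
    simp [map_mul, LinearEquiv.mul_apply, hu g]
  obtain ⟨c, hc⟩ := hirr.exists_eq_smul_id T hcomm
  have htrace : c * Module.finrank ℂ W = Nat.card H * ⟪u, u⟫_ℂ := by
    have h1 := congrArg (LinearMap.trace ℂ W) hc
    simp only [T, map_sum, InnerProductSpace.trace_rankOne, hu _ u u, Finset.sum_const,
      Finset.card_univ, nsmul_eq_mul, map_smul, LinearMap.trace_id, smul_eq_mul] at h1
    rw [← h1, Nat.card_eq_fintype_card]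
  have hd : (Module.finrank ℂ W : ℂ) ≠ 0 := by exact_mod_cast Module.finrank_pos.ne'
  calc ∑ h : H, ⟪ρ h u, x⟫_ℂ * ⟪y, ρ h u⟫_ℂ
      = ⟪y, T x⟫_ℂ := by simp [hT, mul_comm]
    _ = c * ⟪y, x⟫_ℂ := by simp [hc]
    _ = _ := by rw [eq_div_iff hd |>.mpr htrace]; ring

end Representation

section GroupAlgebra

theorem convC_assoc (a b c : G → ℂ) : convC (convC a b) c = convC a (convC b c) := by
  funext x
  simp only [convC, Finset.sum_mul, Finset.mul_sum]
  rw [Finset.sum_comm]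
  refine Finset.sum_congr rfl fun h _ => ?_
  rw [← Equiv.sum_comp (Equiv.mulLeft h)]
  simp [mul_assoc]

theorem innerC_convC_left_of_starC_eq {ψ : G → ℂ} (hψ : starC ψ = ψ) (f₁ f₂ : G → ℂ) :
    innerC (convC f₁ ψ) f₂ = innerC f₁ (convC f₂ ψ) := by
  have hconj : ∀ x, conj (ψ x) = ψ x⁻¹ := fun x => by simpa [starC] using congrFun hψ x⁻¹
  simp only [innerC, convC, Finset.sum_mul, map_sum, map_mul, Finset.mul_sum, hconj]
  rw [Finset.sum_comm]
  refine Fintype.sum_congr _ _ fun h => Fintype.sum_congr _ _ fun g => ?_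
  rw [mul_inv_rev, inv_inv]
  ring

theorem range_convC_right_of_idem {ψ : G → ℂ} (hψ : convC ψ ψ = ψ) :
    Set.range (fun f : G → ℂ => convC f ψ) = {φ | convC φ ψ = φ} := by
  refine Set.Subset.antisymm ?_ fun φ hφ => ⟨φ, hφ⟩
  rintro _ ⟨f, rfl⟩
  show convC (convC f ψ) ψ = convC f ψ
  rw [convC_assoc, hψ]

theorem convC_apply_eq_sum_subgroup {φ ψ : G → ℂ} (hψ : ∀ g ∉ K, ψ g = 0) (g : G) :
    convC φ ψ g = ∑ k : K, φ (g * k) * ψ (k : G)⁻¹ := by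
  have hout : ∀ x : {x // x ∉ K}, φ (g * x) * ψ (x : G)⁻¹ = 0 := fun x => by
    rw [hψ _ (by simpa using x.2), mul_zero]
  rw [convC, ← Equiv.sum_comp (Equiv.mulLeft g)]
  simp only [Equiv.coe_mulLeft, mul_inv_rev, inv_mul_cancel_right]
  rw [← Fintype.sum_subtype_add_sum_subtype (· ∈ K), Fintype.sum_eq_zero _ hout, add_zero]

theorem natCard_mul_sum_eq_sum_sum_mul (F : G → ℂ) :
    (Nat.card K : ℂ) * ∑ g, F g = ∑ g, ∑ k : K, F (g * k) := by
  rw [Finset.sum_comm, Nat.card_eq_fintype_card, ← nsmul_eq_mul, ← Finset.card_univ,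
    ← Finset.sum_const]
  exact Finset.sum_congr rfl fun k _ => (Equiv.sum_comp (Equiv.mulRight (k : G)) F).symm

end GroupAlgebra

section Psi

theorem psi_apply_coe (v : V) (k : K) :
    psi K θ v k = (Module.finrank ℂ V : ℂ) / Nat.card K * ⟪θ k v, v⟫_ℂ :=
  dif_pos k.2

theorem psi_apply_of_notMem (v : V) {g : G} (hg : g ∉ K) : psi K θ v g = 0 :=
  dif_neg hg

variable {K θ}

theorem psi_apply_coe_inv (hu : IsUnitaryRep θ) (v : V) (k : K) :
    psi K θ v (k : G)⁻¹ = (Module.finrank ℂ V : ℂ) / Nat.card K * ⟪v, θ k v⟫_ℂ := by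
  rw [← Subgroup.coe_inv, psi_apply_coe, hu.inner_map_inv_left]

theorem starC_psi (hu : IsUnitaryRep θ) (v : V) : starC (psi K θ v) = psi K θ v := by
  funext g
  by_cases hg : g ∈ K
  · simp only [starC, psi_apply_coe_inv hu v ⟨g, hg⟩, psi_apply_coe K θ v ⟨g, hg⟩, map_mul,
      inner_conj_symm, map_div₀, map_natCast]
  · rw [starC, psi_apply_of_notMem K θ v hg, psi_apply_of_notMem K θ v (by simpa using hg),
      map_zero]

theorem convC_psi_apply (v : V) (φ : G → ℂ) (g : G) :
    convC φ (psi K θ v) g = ∑ k : K, φ (g * k) * psi K θ v (k : G)⁻¹ :=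
  convC_apply_eq_sum_subgroup K (fun _ hg => psi_apply_of_notMem K θ v hg) g

theorem sum_inner_mul_psi_inv (hu : IsUnitaryRep θ) (hirr : IsIrreducibleRep θ) {v : V}
    (hv : ‖v‖ = 1) (x : V) :
    ∑ k : K, ⟪θ k v, x⟫_ℂ * psi K θ v (k : G)⁻¹ = ⟪v, x⟫_ℂ := by
  have := hirr.nontrivial
  have hvv : ⟪v, v⟫_ℂ = 1 := by simp [inner_self_eq_norm_sq_to_K, hv]
  have hd : (Module.finrank ℂ V : ℂ) ≠ 0 := by exact_mod_cast Module.finrank_pos.ne'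
  have hn : (Nat.card K : ℂ) ≠ 0 := by exact_mod_cast Nat.card_pos.ne'
  simp_rw [psi_apply_coe_inv hu, mul_left_comm _ (_ / _ : ℂ), ← Finset.mul_sum,
    hirr.sum_inner_mul_inner hu, hvv]
  field_simp

theorem convC_psi_psi (hu : IsUnitaryRep θ) (hirr : IsIrreducibleRep θ) {v : V} (hv : ‖v‖ = 1) :
    convC (psi K θ v) (psi K θ v) = psi K θ v := by
  funext g
  rw [convC_psi_apply]
  by_cases hg : g ∈ K
  · have hgk : ∀ k : K, psi K θ v (g * k) =
        (Module.finrank ℂ V : ℂ) / Nat.card K * ⟪θ k v, θ ⟨g, hg⟩⁻¹ v⟫_ℂ := fun k => by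
      rw [show g * (k : G) = ((⟨g, hg⟩ * k : K) : G) from rfl, psi_apply_coe, map_mul,
        LinearEquiv.mul_apply, ← hu.inner_map_inv_right]
    simp_rw [hgk, mul_assoc, ← Finset.mul_sum, sum_inner_mul_psi_inv hu hirr hv,
      hu.inner_map_inv_right, psi_apply_coe K θ v ⟨g, hg⟩]
  · have hgk : ∀ k : K, psi K θ v (g * k) = 0 := fun k =>
      psi_apply_of_notMem K θ v fun h => hg (by simpa using K.mul_mem h (K.inv_mem k.2))
    simp [hgk, psi_apply_of_notMem K θ v hg]

end Psi

section Tv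

variable {K θ}

theorem Tv_add (v : V) (f₁ f₂ : G → V) : Tv K v (f₁ + f₂) = Tv K v f₁ + Tv K v f₂ := by
  funext g
  simp [Tv, mul_add]

theorem Tv_sub (v : V) (f₁ f₂ : G → V) : Tv K v (f₁ - f₂) = Tv K v f₁ - Tv K v f₂ := by
  funext g
  simp [Tv, mul_sub]

theorem Tv_smul (v : V) (c : ℂ) (f : G → V) : Tv K v (c • f) = c • Tv K v f := by
  funext g
  simp [Tv, mul_left_comm]

theorem Tv_translate (v : V) (h : G) (f : G → V) :
    Tv K v (translate h f) = translate h (Tv K v f) :=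
  rfl

theorem ofReal_sqrt_div_mul_self (a b : ℕ) :
    (√((a : ℝ) / b) : ℂ) * √((a : ℝ) / b) = (a : ℂ) / b := by
  rw [← Complex.ofReal_mul, Real.mul_self_sqrt (by positivity)]
  push_cast
  rfl

theorem sum_inner_mul_inner_of_mem_ind (hu : IsUnitaryRep θ) (hirr : IsIrreducibleRep θ) {v : V}
    (hv : ‖v‖ = 1) {f₁ f₂ : G → V} (hf₁ : f₁ ∈ ind K θ) (hf₂ : f₂ ∈ ind K θ) (g : G) :
    ∑ k : K, ⟪v, f₁ (g * k)⟫_ℂ * ⟪f₂ (g * k), v⟫_ℂ =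
      (Nat.card K : ℂ) / Module.finrank ℂ V * ⟪f₂ g, f₁ g⟫_ℂ := by
  have hvv : ⟪v, v⟫_ℂ = 1 := by simp [inner_self_eq_norm_sq_to_K, hv]
  simp_rw [hf₁ g, hf₂ g, hu.inner_map_inv_right, hu.inner_map_inv_left,
    hirr.sum_inner_mul_inner hu, hvv, mul_one]

theorem innerC_Tv (hu : IsUnitaryRep θ) (hirr : IsIrreducibleRep θ) {v : V} (hv : ‖v‖ = 1)
    {f₁ f₂ : G → V} (hf₁ : f₁ ∈ ind K θ) (hf₂ : f₂ ∈ ind K θ) :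
    innerC (Tv K v f₁) (Tv K v f₂) = innerInd K f₁ f₂ := by
  have := hirr.nontrivial
  have hd : (Module.finrank ℂ V : ℂ) ≠ 0 := by exact_mod_cast Module.finrank_pos.ne'
  have hn : (Nat.card K : ℂ) ≠ 0 := by exact_mod_cast Nat.card_pos.ne'
  have haverage := natCard_mul_sum_eq_sum_sum_mul K fun g => ⟪v, f₁ g⟫_ℂ * ⟪f₂ g, v⟫_ℂ
  simp only [sum_inner_mul_inner_of_mem_ind hu hirr hv hf₁ hf₂, ← Finset.mul_sum] at haverage
  have hT : innerC (Tv K v f₁) (Tv K v f₂) =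
      (Module.finrank ℂ V : ℂ) / Nat.card K * ∑ g, ⟪v, f₁ g⟫_ℂ * ⟪f₂ g, v⟫_ℂ := by
    simp only [innerC, Tv, map_mul, Complex.conj_ofReal, inner_conj_symm, Finset.mul_sum,
      ← ofReal_sqrt_div_mul_self]
    exact Fintype.sum_congr _ _ fun g => by ring
  rw [hT, innerInd]
  field_simp at haverage ⊢
  linear_combination haverage


theorem eq_zero_of_innerInd_self_eq_zero {f : G → V} (hf : innerInd K f f = 0) : f = 0 := by
  have hn : (Nat.card K : ℂ)⁻¹ ≠ 0 := inv_ne_zero (by exact_mod_cast Nat.card_pos.ne')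
  have hsum : ∑ g, ‖f g‖ ^ 2 = 0 := by
    have : ((∑ g, ‖f g‖ ^ 2 : ℝ) : ℂ) = 0 := by
      simpa [innerInd, hn, inner_self_eq_norm_sq_to_K] using hf
    exact_mod_cast this
  funext g
  simpa using congrFun ((Fintype.sum_eq_zero_iff_of_nonneg fun _ => by positivity).mp hsum) g

theorem Tv_injOn (hu : IsUnitaryRep θ) (hirr : IsIrreducibleRep θ) {v : V} (hv : ‖v‖ = 1) :
    Set.InjOn (Tv K v) (ind K θ) := by
  intro f₁ hf₁ f₂ hf₂ heq
  have hsub := (ind K θ).sub_mem hf₁ hf₂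
  have hzero : innerInd K (f₁ - f₂) (f₁ - f₂) = 0 := by
    rw [← innerC_Tv hu hirr hv hsub hsub, Tv_sub, heq, sub_self]
    simp [innerC]
  exact sub_eq_zero.mp (eq_zero_of_innerInd_self_eq_zero hzero)

theorem convC_Tv_psi (hu : IsUnitaryRep θ) (hirr : IsIrreducibleRep θ) {v : V} (hv : ‖v‖ = 1)
    {f : G → V} (hf : f ∈ ind K θ) : convC (Tv K v f) (psi K θ v) = Tv K v f := by
  funext g
  simp only [convC_psi_apply, Tv, hf g, hu.inner_map_inv_right, mul_assoc, ← Finset.mul_sum,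
    sum_inner_mul_psi_inv hu hirr hv]

variable (θ) in
def indLift (v : V) (φ : G → ℂ) : G → V := fun g =>
  (√((Module.finrank ℂ V : ℝ) / Nat.card K) : ℂ) • ∑ k : K, φ (g * k) • θ k v

theorem indLift_mem_ind (v : V) (φ : G → ℂ) : indLift θ v φ ∈ ind K θ := by
  intro g k₀
  simp only [indLift, map_smul, map_sum]
  congr 1
  rw [← Equiv.sum_comp (Equiv.mulLeft k₀⁻¹)]
  simp [mul_assoc, map_mul, LinearEquiv.mul_apply]

theorem Tv_indLift (hu : IsUnitaryRep θ) (v : V) (φ : G → ℂ) :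
    Tv K v (indLift θ v φ) = convC φ (psi K θ v) := by
  funext g
  simp only [Tv, indLift, convC_psi_apply, psi_apply_coe_inv hu, inner_smul_right, inner_sum,
    ← mul_assoc, ofReal_sqrt_div_mul_self, Finset.mul_sum]
  exact Fintype.sum_congr _ _ fun k => by ring

theorem image_Tv_ind (hu : IsUnitaryRep θ) (hirr : IsIrreducibleRep θ) {v : V} (hv : ‖v‖ = 1) :
    Tv K v '' (ind K θ : Set (G → V)) = {φ | convC φ (psi K θ v) = φ} := by
  refine Set.Subset.antisymm ?_ fun φ hφ => ?_
  · rintro _ ⟨f, hf, rfl⟩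
    exact convC_Tv_psi hu hirr hv hf
  · exact ⟨indLift θ v φ, indLift_mem_ind v φ, (Tv_indLift hu v φ).trans hφ⟩

end Tv

/-- (1) `T_v : Ind_K^G V → L(G)`, `(T_v f) g = √(d_θ/|K|) ⟨f g, v⟩`, is a
`G`-equivariant linear isometry of the induced space into `L(G)` with its left regular
representation; in particular its image `I(G,K,ψ)` is a `G`-invariant subspace of `L(G)`
`G`-isomorphic to `Ind_K^G V`.  (2) `ψ * ψ = ψ`, `ψ* = ψ`, and the operator `P f = f * ψ` is
the orthogonal projection of `L(G)` onto `I(G,K,ψ)`, whence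
`I(G,K,ψ) = {f * ψ : f ∈ L(G)} = {f : f * ψ = f}`. -/
theorem statement2 (K : Subgroup G) (θ : ↥K →* (V ≃ₗ[ℂ] V))
    (hu : IsUnitaryRep θ) (hirr : IsIrreducibleRep θ) (v : V) (hv : ‖v‖ = 1) :
    -- (1) T_v is linear ...
    (∀ f₁ f₂ : G → V, Tv K v (f₁ + f₂) = Tv K v f₁ + Tv K v f₂) ∧
    (∀ (c : ℂ) (f : G → V), Tv K v (c • f) = c • Tv K v f) ∧
    -- ... G-equivariant ...
    (∀ (h : G) (f : G → V), Tv K v (translate h f) = translate h (Tv K v f)) ∧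
    -- ... and isometric (hence injective) on the induced space
    (∀ f₁ ∈ ind K θ, ∀ f₂ ∈ ind K θ, innerC (Tv K v f₁) (Tv K v f₂) = innerInd K f₁ f₂) ∧
    (∀ f₁ ∈ ind K θ, ∀ f₂ ∈ ind K θ, Tv K v f₁ = Tv K v f₂ → f₁ = f₂) ∧
    -- the image I(G,K,ψ) is G-invariant
    (∀ h : G, ∀ φ ∈ Tv K v '' (ind K θ : Set (G → V)),
      translate h φ ∈ Tv K v '' (ind K θ : Set (G → V))) ∧
    -- (2) ψ is a self-adjoint idempotent
    convC (psi K θ v) (psi K θ v) = psi K θ v ∧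
    starC (psi K θ v) = psi K θ v ∧
    -- P f = f * ψ is self-adjoint ...
    (∀ f₁ f₂ : G → ℂ, innerC (convC f₁ (psi K θ v)) f₂ = innerC f₁ (convC f₂ (psi K θ v))) ∧
    -- ... idempotent (since ψ * ψ = ψ), and its range is exactly I(G,K,ψ) = T_v(Ind_K^G V):
    Tv K v '' (ind K θ : Set (G → V)) = {φ : G → ℂ | convC φ (psi K θ v) = φ} ∧
    Set.range (fun f : G → ℂ => convC f (psi K θ v)) = {φ : G → ℂ | convC φ (psi K θ v) = φ} := by
  have hinvariant : ∀ h : G, ∀ φ ∈ Tv K v '' (ind K θ : Set (G → V)),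
      translate h φ ∈ Tv K v '' (ind K θ : Set (G → V)) := by
    rintro h _ ⟨f, hf, rfl⟩
    exact ⟨translate h f, translate_mem_ind K θ hf h, Tv_translate v h f⟩
  exact ⟨Tv_add v, Tv_smul v, Tv_translate v, fun _ hf₁ _ hf₂ => innerC_Tv hu hirr hv hf₁ hf₂,
    fun _ hf₁ _ hf₂ => Tv_injOn hu hirr hv hf₁ hf₂, hinvariant, convC_psi_psi hu hirr hv,
    starC_psi hu v, innerC_convC_left_of_starC_eq (starC_psi hu v), image_Tv_ind hu hirr hv,
    range_convC_right_of_idem (convC_psi_psi hu hirr hv)⟩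

end MFT
end
end

section
/- (Generalized Bump–Ginzburg criterion) Suppose there exist an antiautomorphism τ : G → G and an algebra antiautomorphism T ↦ T^♯ of End(V) such that: (i) τ(K) = K; (ii) θ(τ(k)) = θ(k)^♯ for all k ∈ K; (iii) for every s ∈ S₀ there exist k₁, k₂ ∈ K with τ(s) = k₁sk₂ and θ(k₂)* T θ(k₁)* = T^♯ for all T ∈ Hom_{K_s}(Res^K_{K_s}θ, θ^s); and (iv) (T^♯)* = (T*)^♯ for all T ∈ End(V). Then the triple (G,K,θ) is multiplicity-free, i.e., dim Hom_G(W, Ind_K^G V) ≤ 1 for every irreducible G-representation W. -/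
/-!
The Hecke algebra of functions `F : G → End V` with `F (k₁ g k₂) = θ k₂⁻¹ ∘ F g ∘ θ k₁⁻¹`,
under convolution, is the algebra of kernels of the commutant `End_G (Ind_K^G V)`. The hypotheses
force `F (τ g) = (F g)^♯` for every such `F`: by bi-equivariance it suffices to check this at the
representatives `s ∈ S`, where `F s ∈ Hom_{K_s}(θ, θ^s)` vanishes unless `s ∈ S₀` and condition
(iii) applies otherwise (unitarity turns `θ(k)*` into `θ(k⁻¹)`). As `τ` and `♯` both reverse
products, `(F₁ * F₂) (τ g) = ((F₂ * F₁) g)^♯`; the left side is also `((F₁ * F₂) g)^♯`, so the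
Hecke algebra, and with it the commutant, is commutative (Gelfand's trick). A commutative
commutant is multiplicity-free: for `G`-maps `A, B : W → Ind` with `A ≠ 0`, an averaged
`G`-equivariant left inverse `P` of `A` makes `P B = c` by Schur, and `E = B - c A` satisfies
`E P = (E P) (A P) = (A P) (E P) = 0`, whence `E = E P A = 0`.
-/

open scoped BigOperators ComplexConjugate Classical

set_option linter.unusedSectionVars false
set_option synthInstance.maxHeartbeats 1000000
set_option maxHeartbeats 1000000

noncomputable section

namespace MFT

variable {G : Type} [Group G] [Fintype G]
variable {V : Type} [NormedAddCommGroup V] [InnerProductSpace ℂ V] [FiniteDimensional ℂ V]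

variable (K : Subgroup G) (θ : ↥K →* (V ≃ₗ[ℂ] V))

section General

variable {H : Type} [Group H]

theorem map_one_of_antimul {τ : H → H} (hτ : ∀ a b : H, τ (a * b) = τ b * τ a) : τ 1 = 1 :=
  right_eq_mul.mp (by rw [← hτ 1 1, mul_one])

theorem map_inv_of_antimul {τ : H → H} (hτ : ∀ a b : H, τ (a * b) = τ b * τ a) (a : H) :
    τ a⁻¹ = (τ a)⁻¹ :=
  eq_inv_of_mul_eq_one_left (by rw [← hτ, mul_inv_cancel, map_one_of_antimul hτ])

theorem exists_eq_mul_mul_of_antimul {L : Subgroup H} {τ : H → H}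
    (hτbij : Function.Bijective τ) (hτanti : ∀ a b : H, τ (a * b) = τ b * τ a)
    (hτL : ∀ g, g ∈ L ↔ τ g ∈ L) {s t : H} {a b k₁ k₂ : L}
    (hs : τ s = a * t * b) (ht : τ t = k₁ * t * k₂) : ∃ c d : L, s = c * t * d := by
  obtain ⟨c, hc⟩ := hτbij.2 (a * (k₁ : H)⁻¹)
  obtain ⟨d, hd⟩ := hτbij.2 ((k₂ : H)⁻¹ * b)
  have hcL : c ∈ L := (hτL c).mpr (hc ▸ L.mul_mem a.2 (L.inv_mem k₁.2))
  have hdL : d ∈ L := (hτL d).mpr (hd ▸ L.mul_mem (L.inv_mem k₂.2) b.2)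
  refine ⟨⟨d, hdL⟩, ⟨c, hcL⟩, hτbij.1 ?_⟩
  rw [hτanti, hτanti, hc, hd, ht, hs]
  group

theorem IsUnitaryRep.adjoint_eq {X : Type} [NormedAddCommGroup X] [InnerProductSpace ℂ X]
    [FiniteDimensional ℂ X] {ρ : H →* (X ≃ₗ[ℂ] X)} (hρ : IsUnitaryRep ρ) (h : H) :
    LinearMap.adjoint (ρ h).toLinearMap = (ρ h⁻¹).toLinearMap := by
  refine ((LinearMap.eq_adjoint_iff _ _).mpr fun x y => ?_).symm
  calc (inner ℂ (ρ h⁻¹ x) y : ℂ) = inner ℂ (ρ h (ρ h⁻¹ x)) (ρ h y) := (hρ h _ _).symm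
    _ = inner ℂ x (ρ h y) := by rw [← LinearEquiv.mul_apply, ← map_mul, mul_inv_cancel, map_one,
      LinearEquiv.coe_one, id]

variable {W Y : Type} [AddCommGroup W] [Module ℂ W] [AddCommGroup Y] [Module ℂ Y]

theorem IsIrreducibleRep.exists_eq_smul_id_s6 [FiniteDimensional ℂ W] {σ : H →* (W ≃ₗ[ℂ] W)}
    (hσ : IsIrreducibleRep σ) {D : W →ₗ[ℂ] W} (hD : ∀ g w, D (σ g w) = σ g (D w)) :
    ∃ c : ℂ, D = c • LinearMap.id := by
  have : Nontrivial W := (Submodule.nontrivial_iff ℂ).mp (nontrivial_of_ne _ _ hσ.1)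
  obtain ⟨c, hc⟩ := Module.End.exists_eigenvalue D
  refine ⟨c, ?_⟩
  have hinv : ∀ g w, w ∈ Module.End.eigenspace D c → σ g w ∈ Module.End.eigenspace D c := by
    intro g w hw
    rw [Module.End.mem_eigenspace_iff] at hw ⊢
    rw [hD, hw, map_smul]
  rcases hσ.2 _ hinv with hbot | htop
  · exact absurd hbot hc
  · ext w
    exact Module.End.mem_eigenspace_iff.mp (htop ▸ Submodule.mem_top)

theorem IsIrreducibleRep.injective_of_ne_zero {σ : H →* (W ≃ₗ[ℂ] W)} (hσ : IsIrreducibleRep σ)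
    {ρ : Representation ℂ H Y} {A : W →ₗ[ℂ] Y} (hA : ∀ g w, A (σ g w) = ρ g (A w))
    (hA0 : A ≠ 0) : Function.Injective A := by
  rw [← LinearMap.ker_eq_bot]
  refine (hσ.2 _ fun g w hw => ?_).resolve_right fun htop => hA0 ?_
  · rw [LinearMap.mem_ker] at hw ⊢
    rw [hA, hw, map_zero]
  · exact LinearMap.ker_eq_top.mp htop

theorem exists_equivariant_leftInverse [Fintype H] (σ : H →* (W ≃ₗ[ℂ] W))
    (ρ : Representation ℂ H Y) {A : W →ₗ[ℂ] Y} (hA : ∀ g w, A (σ g w) = ρ g (A w))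
    (hinj : Function.Injective A) :
    ∃ P : Y →ₗ[ℂ] W, (∀ g y, P (ρ g y) = σ g (P y)) ∧ P ∘ₗ A = LinearMap.id := by
  obtain ⟨P₀, hP₀⟩ := A.exists_leftInverse_of_injective (LinearMap.ker_eq_bot.mpr hinj)
  have hcard : (Fintype.card H : ℂ) ≠ 0 := Nat.cast_ne_zero.mpr Fintype.card_ne_zero
  refine ⟨(Fintype.card H : ℂ)⁻¹ • ∑ g : H, (σ g).toLinearMap ∘ₗ P₀ ∘ₗ ρ g⁻¹, fun h y => ?_, ?_⟩
  · simp only [LinearMap.smul_apply, LinearMap.sum_apply, LinearMap.comp_apply, map_smul, map_sum]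
    congr 1
    refine Fintype.sum_equiv (Equiv.mulLeft h⁻¹) _ _ fun g => ?_
    simp only [Equiv.coe_mulLeft, LinearEquiv.coe_coe, ← LinearEquiv.mul_apply, ← map_mul,
      ← Module.End.mul_apply, mul_inv_rev, inv_inv, mul_inv_cancel_left]
  · ext w
    have hterm : ∀ g : H, σ g (P₀ (ρ g⁻¹ (A w))) = w := fun g => by
      rw [← hA, ← LinearMap.comp_apply P₀, hP₀, LinearMap.id_apply, ← LinearEquiv.mul_apply,
        ← map_mul, mul_inv_cancel, map_one, LinearEquiv.coe_one, id]
    simp only [LinearMap.comp_apply, LinearMap.smul_apply, LinearMap.sum_apply,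
      LinearEquiv.coe_coe, hterm, Finset.sum_const, Finset.card_univ, LinearMap.id_apply,
      ← Nat.cast_smul_eq_nsmul ℂ, smul_smul, inv_mul_cancel₀ hcard, one_smul]

theorem eq_smul_of_commute_of_isIrreducibleRep [Fintype H] [FiniteDimensional ℂ W]
    {σ : H →* (W ≃ₗ[ℂ] W)} (hσ : IsIrreducibleRep σ) {ρ : Representation ℂ H Y}
    (hcomm : ∀ T₁ T₂ : Y →ₗ[ℂ] Y, (∀ g y, T₁ (ρ g y) = ρ g (T₁ y)) →
      (∀ g y, T₂ (ρ g y) = ρ g (T₂ y)) → T₁ ∘ₗ T₂ = T₂ ∘ₗ T₁)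
    {A B : W →ₗ[ℂ] Y} (hA : ∀ g w, A (σ g w) = ρ g (A w)) (hB : ∀ g w, B (σ g w) = ρ g (B w))
    (hA0 : A ≠ 0) : ∃ c : ℂ, B = c • A := by
  obtain ⟨P, hPeq, hPA⟩ :=
    exists_equivariant_leftInverse σ ρ hA (hσ.injective_of_ne_zero hA hA0)
  obtain ⟨c, hc⟩ := hσ.exists_eq_smul_id_s6 (D := P ∘ₗ B) fun g w => by
    rw [LinearMap.comp_apply, hB, hPeq, LinearMap.comp_apply]
  refine ⟨c, ?_⟩
  set E := B - c • A
  have hPE : P ∘ₗ E = 0 := by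
    rw [LinearMap.comp_sub, LinearMap.comp_smul, hc, hPA, sub_self]
  have hEP : E ∘ₗ P = 0 :=
    calc E ∘ₗ P = (E ∘ₗ P) ∘ₗ (A ∘ₗ P) := by
          rw [LinearMap.comp_assoc, ← LinearMap.comp_assoc P A P, hPA, LinearMap.id_comp]
      _ = (A ∘ₗ P) ∘ₗ (E ∘ₗ P) :=
          hcomm _ _ (fun g y => by simp [E, hPeq, hA, hB]) (fun g y => by simp [hPeq, hA])
      _ = 0 := by
          rw [LinearMap.comp_assoc, ← LinearMap.comp_assoc P E P, hPE, LinearMap.zero_comp,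
            LinearMap.comp_zero]
  rw [← sub_eq_zero]
  change E = 0
  rw [← LinearMap.comp_id E, ← hPA, ← LinearMap.comp_assoc, hEP, LinearMap.zero_comp]

end General

namespace IsHecke

variable {K θ} {F : G → (V →ₗ[ℂ] V)}

theorem apply_mem_interSpace (hF : IsHecke K θ F) (s : G) : F s ∈ interSpace K θ s := by
  intro x hx hx'
  have hleft : F (x * s) = F s ∘ₗ (θ ⟨x, hx⟩⁻¹).toLinearMap := by simpa using hF s ⟨x, hx⟩ 1
  have hright : F (x * s) = (θ ⟨s⁻¹ * x * s, hx'⟩⁻¹).toLinearMap ∘ₗ F s := by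
    simpa [mul_assoc] using hF s 1 ⟨s⁻¹ * x * s, hx'⟩
  ext v
  have := LinearMap.congr_fun (hleft.symm.trans hright) (θ ⟨x, hx⟩ v)
  simp only [map_inv, LinearMap.coe_comp, LinearEquiv.coe_coe, LinearEquiv.coe_inv,
    Function.comp_apply, LinearEquiv.symm_apply_apply] at this
  simp [this]

theorem eq_zero_of_interSpace_eq_bot (hF : IsHecke K θ F) {s : G} (hs : interSpace K θ s = ⊥) :
    F s = 0 := by
  simpa [hs] using hF.apply_mem_interSpace s

theorem conv {F' : G → (V →ₗ[ℂ] V)} (hF : IsHecke K θ F) (hF' : IsHecke K θ F') :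
    IsHecke K θ (heckeConv F F') := by
  intro g k₁ k₂
  have hterm : ∀ h : G, F (((k₁ : G) * h)⁻¹ * ((k₁ : G) * g * k₂)) ∘ₗ F' (k₁ * h)
      = (θ k₂⁻¹).toLinearMap ∘ₗ (F (h⁻¹ * g) ∘ₗ F' h) ∘ₗ (θ k₁⁻¹).toLinearMap := fun h => by
    have hleft : F (h⁻¹ * g * k₂) = (θ k₂⁻¹).toLinearMap ∘ₗ F (h⁻¹ * g) := by
      simpa using hF (h⁻¹ * g) 1 k₂
    have hright : F' (k₁ * h) = F' h ∘ₗ (θ k₁⁻¹).toLinearMap := by simpa using hF' h k₁ 1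
    rw [show ((k₁ : G) * h)⁻¹ * ((k₁ : G) * g * k₂) = h⁻¹ * g * k₂ by group, hleft, hright]
    simp only [LinearMap.comp_assoc]
  rw [heckeConv, ← Equiv.sum_comp (Equiv.mulLeft (k₁ : G))]
  simp only [Equiv.coe_mulLeft, hterm]
  ext v
  simp [heckeConv, LinearMap.sum_apply]

end IsHecke

section BumpGinzburg

variable {K θ} {τ : G → G} {sharp : (V →ₗ[ℂ] V) →ₗ[ℂ] (V →ₗ[ℂ] V)}

theorem IsDoubleCosetReps.eq_of_eq_mul_mul {S : Finset G} (hS : IsDoubleCosetReps K S) {s t : G}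
    (hs : s ∈ S) (ht : t ∈ S) {c d : K} (h : s = c * t * d) : s = t := by
  obtain ⟨_, -, huniq⟩ := hS s
  exact (huniq s ⟨hs, 1, 1, by simp⟩).trans (huniq t ⟨ht, c, d, h⟩).symm

theorem IsHecke.apply_antimul_mul_mul {F : G → (V →ₗ[ℂ] V)} (hF : IsHecke K θ F)
    (hτanti : ∀ a b : G, τ (a * b) = τ b * τ a) (hτK : ∀ g : G, g ∈ K → τ g ∈ K)
    (hsharpanti : ∀ A B : V →ₗ[ℂ] V, sharp (A ∘ₗ B) = sharp B ∘ₗ sharp A)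
    (hθτ : ∀ k k' : K, (k' : G) = τ (k : G) → (θ k').toLinearMap = sharp (θ k).toLinearMap)
    {s : G} (hs : F (τ s) = sharp (F s)) (a b : K) :
    F (τ (a * s * b)) = sharp (F (a * s * b)) := by
  have hθτ_inv : ∀ k : K,
      (θ ⟨τ k, hτK k k.2⟩⁻¹).toLinearMap = sharp (θ k⁻¹).toLinearMap := fun k =>
    hθτ _ _ (by simp [map_inv_of_antimul hτanti])
  have hτasb : τ (a * s * b) = (⟨τ b, hτK b b.2⟩ : K) * τ s * (⟨τ a, hτK a a.2⟩ : K) := by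
    rw [hτanti, hτanti, mul_assoc]
  rw [hτasb, hF, hF, hs, hθτ_inv, hθτ_inv, hsharpanti, hsharpanti, LinearMap.comp_assoc]

theorem IsHecke.apply_tau_of_mem {F : G → (V →ₗ[ℂ] V)} (hF : IsHecke K θ F) (hu : IsUnitaryRep θ)
    {S : Finset G} (hS : IsDoubleCosetReps K S)
    (hτbij : Function.Bijective τ) (hτanti : ∀ a b : G, τ (a * b) = τ b * τ a)
    (hτK : ∀ g : G, g ∈ K ↔ τ g ∈ K)
    (hS₀ : ∀ s ∈ S, interSpace K θ s ≠ ⊥ →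
      ∃ k₁ k₂ : K, τ s = (k₁ : G) * s * (k₂ : G) ∧
        ∀ T ∈ interSpace K θ s,
          LinearMap.adjoint (θ k₂).toLinearMap ∘ₗ T ∘ₗ
              LinearMap.adjoint (θ k₁).toLinearMap = sharp T)
    {s : G} (hs : s ∈ S) : F (τ s) = sharp (F s) := by
  by_cases h0 : interSpace K θ s = ⊥
  · rw [hF.eq_zero_of_interSpace_eq_bot h0, map_zero]
    obtain ⟨t, ⟨ht, a, b, hτs⟩, -⟩ := hS (τ s)
    -- `τ s ∈ K t K` with `t ∈ S`; were `t ∈ S₀`, `K t K` would be `τ`-stable and so contain `s`.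
    have h0' : interSpace K θ t = ⊥ := by
      by_contra hne
      obtain ⟨k₁, k₂, hτt, -⟩ := hS₀ t ht hne
      obtain ⟨c, d, hst⟩ := exists_eq_mul_mul_of_antimul hτbij hτanti hτK hτs hτt
      exact hne (hS.eq_of_eq_mul_mul hs ht hst ▸ h0)
    rw [hτs, hF, hF.eq_zero_of_interSpace_eq_bot h0', LinearMap.zero_comp, LinearMap.comp_zero]
  · obtain ⟨k₁, k₂, hτs, hsharp⟩ := hS₀ s hs h0
    rw [hτs, hF, ← hsharp _ (hF.apply_mem_interSpace s), hu.adjoint_eq, hu.adjoint_eq]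

theorem IsHecke.apply_tau {F : G → (V →ₗ[ℂ] V)} (hF : IsHecke K θ F) (hu : IsUnitaryRep θ)
    {S : Finset G} (hS : IsDoubleCosetReps K S)
    (hτbij : Function.Bijective τ) (hτanti : ∀ a b : G, τ (a * b) = τ b * τ a)
    (hsharpanti : ∀ A B : V →ₗ[ℂ] V, sharp (A ∘ₗ B) = sharp B ∘ₗ sharp A)
    (hτK : ∀ g : G, g ∈ K ↔ τ g ∈ K)
    (hθτ : ∀ k k' : K, (k' : G) = τ (k : G) → (θ k').toLinearMap = sharp (θ k).toLinearMap)
    (hS₀ : ∀ s ∈ S, interSpace K θ s ≠ ⊥ →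
      ∃ k₁ k₂ : K, τ s = (k₁ : G) * s * (k₂ : G) ∧
        ∀ T ∈ interSpace K θ s,
          LinearMap.adjoint (θ k₂).toLinearMap ∘ₗ T ∘ₗ
              LinearMap.adjoint (θ k₁).toLinearMap = sharp T)
    (g : G) : F (τ g) = sharp (F g) := by
  obtain ⟨s, ⟨hs, a, b, rfl⟩, -⟩ := hS g
  exact hF.apply_antimul_mul_mul hτanti (fun g => (hτK g).mp) hsharpanti hθτ
    (hF.apply_tau_of_mem hu hS hτbij hτanti hτK hS₀ hs) a b

theorem heckeConv_apply_antimul (hτbij : Function.Bijective τ)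
    (hτanti : ∀ a b : G, τ (a * b) = τ b * τ a)
    (hsharpanti : ∀ A B : V →ₗ[ℂ] V, sharp (A ∘ₗ B) = sharp B ∘ₗ sharp A)
    {F₁ F₂ : G → (V →ₗ[ℂ] V)} (h₁ : ∀ g, F₁ (τ g) = sharp (F₁ g))
    (h₂ : ∀ g, F₂ (τ g) = sharp (F₂ g)) (g : G) :
    heckeConv F₁ F₂ (τ g) = sharp (heckeConv F₂ F₁ g) :=
  calc ∑ h : G, F₁ (h⁻¹ * τ g) ∘ₗ F₂ h
      = ∑ u : G, F₁ (τ (g * u⁻¹)) ∘ₗ F₂ (τ u) := by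
        rw [← Equiv.sum_comp (Equiv.ofBijective τ hτbij)]
        simp [hτanti, map_inv_of_antimul hτanti]
    _ = ∑ u : G, sharp (F₂ u ∘ₗ F₁ (g * u⁻¹)) := by simp only [h₁, h₂, hsharpanti]
    _ = sharp (∑ h : G, F₂ (h⁻¹ * g) ∘ₗ F₁ h) := by
        rw [map_sum, ← Equiv.sum_comp ((Equiv.inv G).trans (Equiv.mulRight g))]
        simp

theorem heckeConv_comm_of_apply_tau (hτbij : Function.Bijective τ)
    (hτanti : ∀ a b : G, τ (a * b) = τ b * τ a) (hsharpinj : Function.Injective sharp)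
    (hsharpanti : ∀ A B : V →ₗ[ℂ] V, sharp (A ∘ₗ B) = sharp B ∘ₗ sharp A)
    (htau : ∀ F, IsHecke K θ F → ∀ g, F (τ g) = sharp (F g))
    {F₁ F₂ : G → (V →ₗ[ℂ] V)} (h₁ : IsHecke K θ F₁) (h₂ : IsHecke K θ F₂) :
    heckeConv F₁ F₂ = heckeConv F₂ F₁ :=
  funext fun g => hsharpinj <| by
    rw [← htau _ (h₁.conv h₂), heckeConv_apply_antimul hτbij hτanti hsharpanti (htau _ h₁)
      (htau _ h₂)]

end BumpGinzburg

def lamRep : Representation ℂ G (ind K θ) where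
  toFun := lamL K θ
  map_one' := by ext f g; simp [lamL, translate]
  map_mul' a b := by ext f g; simp [lamL, translate, mul_assoc]

theorem sum_ite_inv_mul_mem {M : Type} [AddCommMonoid M] (g : G) (x : M) :
    ∑ h : G, (if h⁻¹ * g ∈ K then x else 0) = Nat.card K • x := by
  rw [← Equiv.sum_comp ((Equiv.inv G).trans (Equiv.mulLeft g))]
  simp [Finset.sum_ite, Nat.card_eq_fintype_card, Fintype.card_subtype]

def deltaFun (v : V) : G → V := fun g => if h : g ∈ K then θ ⟨g, h⟩⁻¹ v else 0

theorem deltaFun_mem_ind (v : V) : deltaFun K θ v ∈ ind K θ := by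
  intro g k
  by_cases hg : g ∈ K
  · have hgk : g * k ∈ K := K.mul_mem hg k.2
    simp only [deltaFun, dif_pos hg, dif_pos hgk]
    rw [show (⟨g * k, hgk⟩ : K) = ⟨g, hg⟩ * k from rfl]
    simp
  · simp [deltaFun, hg, K.mul_mem_cancel_right k.2]

def delta : V →ₗ[ℂ] ind K θ where
  toFun v := ⟨deltaFun K θ v, deltaFun_mem_ind K θ v⟩
  map_add' v w := by ext g; by_cases hg : g ∈ K <;> simp [deltaFun, hg]
  map_smul' c v := by ext g; by_cases hg : g ∈ K <;> simp [deltaFun, hg]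

theorem lamL_delta (k : K) (v : V) : lamL K θ (k : G)⁻¹ (delta K θ v) = delta K θ (θ k⁻¹ v) := by
  ext g
  by_cases hg : g ∈ K
  · have hkg : (k : G) * g ∈ K := K.mul_mem k.2 hg
    simp only [lamL, delta, translate, deltaFun, LinearMap.coe_mk, AddHom.coe_mk, inv_inv,
      dif_pos hkg, dif_pos hg]
    rw [show (⟨k * g, hkg⟩ : K) = k * ⟨g, hg⟩ from rfl]
    simp
  · simp [lamL, delta, translate, deltaFun, hg, K.mul_mem_cancel_left k.2]

theorem lamL_delta_apply (f : ind K θ) (h g : G) :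
    (lamL K θ h (delta K θ ((f : G → V) h)) : G → V) g
      = if h⁻¹ * g ∈ K then (f : G → V) g else 0 := by
  by_cases hk : h⁻¹ * g ∈ K
  · have hfh : (f : G → V) h = θ ⟨h⁻¹ * g, hk⟩ ((f : G → V) g) := by
      simpa using f.2 g ⟨h⁻¹ * g, hk⟩⁻¹
    simp [lamL, delta, translate, deltaFun, hk, hfh]
  · simp [lamL, delta, translate, deltaFun, hk]

theorem eq_smul_sum_lamL_delta (f : ind K θ) :
    f = (Nat.card K : ℂ)⁻¹ • ∑ h : G, lamL K θ h (delta K θ ((f : G → V) h)) := by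
  have hK : (Nat.card K : ℂ) ≠ 0 := Nat.cast_ne_zero.mpr Nat.card_pos.ne'
  ext g
  simp only [SetLike.val_smul, Submodule.coe_sum, Pi.smul_apply, Finset.sum_apply,
    lamL_delta_apply, sum_ite_inv_mul_mem, ← Nat.cast_smul_eq_nsmul ℂ, smul_smul,
    inv_mul_cancel₀ hK, one_smul]

def heckeKernel (T : ind K θ →ₗ[ℂ] ind K θ) : G → (V →ₗ[ℂ] V) := fun g =>
  (Nat.card K : ℂ)⁻¹ • (LinearMap.proj g ∘ₗ (ind K θ).subtype ∘ₗ T ∘ₗ delta K θ)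

theorem heckeKernel_apply (T : ind K θ →ₗ[ℂ] ind K θ) (g : G) (v : V) :
    heckeKernel K θ T g v = (Nat.card K : ℂ)⁻¹ • (T (delta K θ v) : G → V) g := rfl

section

variable {K θ}

theorem isHecke_heckeKernel {T : ind K θ →ₗ[ℂ] ind K θ} (hT : T ∈ commutant K θ) :
    IsHecke K θ (heckeKernel K θ T) := by
  intro g k₁ k₂
  ext v
  have hleft : (T (delta K θ v) : G → V) (k₁ * g)
      = (T (delta K θ (θ k₁⁻¹ v)) : G → V) g := by
    rw [← lamL_delta, hT]
    simp [lamL, translate]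
  simp only [LinearMap.comp_apply, LinearEquiv.coe_coe, heckeKernel_apply, map_smul,
    (T (delta K θ v)).2 (k₁ * g) k₂, hleft]

theorem apply_eq_sum_heckeKernel {T : ind K θ →ₗ[ℂ] ind K θ} (hT : T ∈ commutant K θ)
    (f : ind K θ) (g : G) :
    (T f : G → V) g = ∑ h : G, heckeKernel K θ T (h⁻¹ * g) ((f : G → V) h) := by
  conv_lhs => rw [eq_smul_sum_lamL_delta K θ f]
  simp only [map_smul, map_sum, hT _ _, SetLike.val_smul, Submodule.coe_sum, Pi.smul_apply,
    Finset.sum_apply, Finset.smul_sum, heckeKernel_apply]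
  rfl

theorem comp_mem_commutant {T₁ T₂ : ind K θ →ₗ[ℂ] ind K θ} (h₁ : T₁ ∈ commutant K θ)
    (h₂ : T₂ ∈ commutant K θ) : T₁ ∘ₗ T₂ ∈ commutant K θ := fun h f => by
  simp only [LinearMap.comp_apply, h₂ h f, h₁ h (T₂ f)]

theorem heckeKernel_comp {T₁ : ind K θ →ₗ[ℂ] ind K θ} (h₁ : T₁ ∈ commutant K θ)
    (T₂ : ind K θ →ₗ[ℂ] ind K θ) :
    heckeKernel K θ (T₁ ∘ₗ T₂) = heckeConv (heckeKernel K θ T₁) (heckeKernel K θ T₂) := by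
  ext g v
  rw [heckeKernel_apply, LinearMap.comp_apply, apply_eq_sum_heckeKernel h₁, heckeConv,
    LinearMap.sum_apply, Finset.smul_sum]
  exact Finset.sum_congr rfl fun h _ => (map_smul _ _ _).symm

theorem commute_of_heckeConv_comm
    (hconv : ∀ {F₁ F₂ : G → (V →ₗ[ℂ] V)}, IsHecke K θ F₁ → IsHecke K θ F₂ →
      heckeConv F₁ F₂ = heckeConv F₂ F₁)
    {T₁ T₂ : ind K θ →ₗ[ℂ] ind K θ} (h₁ : T₁ ∈ commutant K θ) (h₂ : T₂ ∈ commutant K θ) :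
    T₁ ∘ₗ T₂ = T₂ ∘ₗ T₁ := by
  ext f g
  rw [apply_eq_sum_heckeKernel (comp_mem_commutant h₁ h₂),
    apply_eq_sum_heckeKernel (comp_mem_commutant h₂ h₁), heckeKernel_comp h₁,
    heckeKernel_comp h₂, hconv (isHecke_heckeKernel h₁) (isHecke_heckeKernel h₂)]

theorem isMultFree_of_commute
    (hcomm : ∀ T₁ T₂ : ind K θ →ₗ[ℂ] ind K θ, T₁ ∈ commutant K θ → T₂ ∈ commutant K θ →
      T₁ ∘ₗ T₂ = T₂ ∘ₗ T₁) :
    IsMultFree K θ := by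
  intro W _ _ _ σ hσ
  have hres : ∀ {A}, (hA : A ∈ homGInd K θ σ) → ∀ g w,
      LinearMap.codRestrict (ind K θ) A hA.1 (σ g w)
        = lamRep K θ g (LinearMap.codRestrict (ind K θ) A hA.1 w) :=
    fun hA g w => Subtype.ext (hA.2 g w)
  by_cases hbot : homGInd K θ σ = ⊥
  · rw [hbot, finrank_bot]
    exact zero_le_one
  obtain ⟨A, hA, hA0⟩ := (Submodule.ne_bot_iff _).mp hbot
  refine finrank_le_one ⟨A, hA⟩ fun ⟨B, hB⟩ => ?_
  obtain ⟨c, hc⟩ := eq_smul_of_commute_of_isIrreducibleRep hσ hcomm (hres hA) (hres hB)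
    fun h => hA0 (LinearMap.ext fun w => congrArg Subtype.val (LinearMap.congr_fun h w))
  exact ⟨c, Subtype.ext <| LinearMap.ext fun w =>
    congrArg Subtype.val (LinearMap.congr_fun hc w).symm⟩

end

theorem statement6_general (K : Subgroup G) (θ : ↥K →* (V ≃ₗ[ℂ] V))
    (hu : IsUnitaryRep θ)
    (S : Finset G) (hS : IsDoubleCosetReps K S)
    (τ : G → G) (hτbij : Function.Bijective τ)
    (hτanti : ∀ a b : G, τ (a * b) = τ b * τ a)
    (sharp : (V →ₗ[ℂ] V) →ₗ[ℂ] (V →ₗ[ℂ] V)) (hsharpbij : Function.Bijective sharp)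
    (hsharpanti : ∀ A B : V →ₗ[ℂ] V, sharp (A ∘ₗ B) = sharp B ∘ₗ sharp A)
    -- τ(K) = K
    (hτK : ∀ g : G, g ∈ K ↔ τ g ∈ K)
    -- θ(τ k) = θ(k)^♯
    (hθτ : ∀ k k' : K, (k' : G) = τ (k : G) →
      (θ k').toLinearMap = sharp (θ k).toLinearMap)
    -- the condition on the elements of S₀
    (hS₀ : ∀ s ∈ S, interSpace K θ s ≠ ⊥ →
      ∃ k₁ k₂ : K, τ s = (k₁ : G) * s * (k₂ : G) ∧
        ∀ T ∈ interSpace K θ s,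
          LinearMap.adjoint (θ k₂).toLinearMap ∘ₗ T ∘ₗ
              LinearMap.adjoint (θ k₁).toLinearMap = sharp T) :
    IsMultFree K θ := by
  have htau : ∀ F, IsHecke K θ F → ∀ g, F (τ g) = sharp (F g) := fun _ hF =>
    hF.apply_tau hu hS hτbij hτanti hsharpanti hτK hθτ hS₀
  have hconv : ∀ {F₁ F₂ : G → (V →ₗ[ℂ] V)}, IsHecke K θ F₁ → IsHecke K θ F₂ →
      heckeConv F₁ F₂ = heckeConv F₂ F₁ :=
    heckeConv_comm_of_apply_tau hτbij hτanti hsharpbij.1 hsharpanti htau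
  exact isMultFree_of_commute fun _ _ => commute_of_heckeConv_comm hconv

/-- generalized Bump–Ginzburg criterion.  Suppose `τ` is an antiautomorphism
of `G` and `T ↦ T^♯` an algebra antiautomorphism of `End(V)` commuting with the adjoint, such
that `τ(K) = K`, `θ(τ k) = θ(k)^♯`, and for every `s ∈ S₀` there are `k₁ k₂ ∈ K` with
`τ s = k₁ s k₂` and `θ(k₂)* T θ(k₁)* = T^♯` for all `T ∈ Hom_{K_s}(Res θ, θ^s)`.  Then the
triple `(G,K,θ)` is multiplicity-free. -/
theorem statement6 (K : Subgroup G) (θ : ↥K →* (V ≃ₗ[ℂ] V))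
    (hu : IsUnitaryRep θ) (hirr : IsIrreducibleRep θ)
    (S : Finset G) (hS : IsDoubleCosetReps K S)
    (τ : G → G) (hτbij : Function.Bijective τ)
    (hτanti : ∀ a b : G, τ (a * b) = τ b * τ a)
    (sharp : (V →ₗ[ℂ] V) →ₗ[ℂ] (V →ₗ[ℂ] V)) (hsharpbij : Function.Bijective sharp)
    (hsharpanti : ∀ A B : V →ₗ[ℂ] V, sharp (A ∘ₗ B) = sharp B ∘ₗ sharp A)
    -- τ(K) = K
    (hτK : ∀ g : G, g ∈ K ↔ τ g ∈ K)
    -- θ(τ k) = θ(k)^♯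
    (hθτ : ∀ k k' : K, (k' : G) = τ (k : G) →
      (θ k').toLinearMap = sharp (θ k).toLinearMap)
    -- the condition on the elements of S₀
    (hS₀ : ∀ s ∈ S, interSpace K θ s ≠ ⊥ →
      ∃ k₁ k₂ : K, τ s = (k₁ : G) * s * (k₂ : G) ∧
        ∀ T ∈ interSpace K θ s,
          LinearMap.adjoint (θ k₂).toLinearMap ∘ₗ T ∘ₗ
              LinearMap.adjoint (θ k₁).toLinearMap = sharp T)
    -- ♯ and * commute
    (hsharpadj : ∀ T : V →ₗ[ℂ] V, LinearMap.adjoint (sharp T) = sharp (LinearMap.adjoint T)) :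
    IsMultFree K θ :=
  statement6_general K θ hu S hS τ hτbij hτanti sharp hsharpbij hsharpanti hτK hθτ hS₀

end MFT
end
end
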